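/- Let (X, 𝒜, μ) be a complete σ-finite measure space. Let D be а real Banach space equipped with a partial order making it an ordered vector space with generating positive cone D⁺ (D = D⁺ − D⁺), and let C > 0 be such that the norm is C-absolutely dominating: C·‖x‖ ≥ inf { ‖a‖ : a ∈ D⁺, −a ≤ x ≤ a } for all x ∈ D. Let f : X → D be a simple function and let ε > 0. Then there exists a simple function g : X → D⁺ with −g(x) ≤ f(x) ≤ g(x) for all x ∈ X and ∫ ‖g‖ dμ ≤ C · ∫ ‖f‖ dμ + ε. -/

import Mathlib

/-!
Pick, for every nonzero value `v` of `f`, a positive `a` with `-a ≤ v ≤ a` and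
`‖a‖ < C ‖v‖ + δ`; such an `a` exists because the cone is generating (so the set of dominating
norms is nonempty) and its infimum is at most `C ‖v‖`. Composing `f` with this choice gives `g`,
and `∫ ‖g‖ ≤ C ∫ ‖f‖ + δ μ(supp f)`, which is at most `C ∫ ‖f‖ + ε` once `δ` is small.
-/

open MeasureTheory Function

section OrderedGroup

variable {D : Type*} [AddCommGroup D] [PartialOrder D] [AddLeftMono D]

lemma neg_add_le_sub_and_sub_le_add {y z : D} (hy : 0 ≤ y) (hz : 0 ≤ z) :
    -(y + z) ≤ y - z ∧ y - z ≤ y + z := by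
  constructor
  · rw [neg_add', sub_le_sub_iff_right]
    exact (neg_nonpos.2 hy).trans hy
  · rw [sub_eq_add_neg]
    exact add_le_add le_rfl ((neg_nonpos.2 hz).trans hz)

end OrderedGroup

section DominatingNorms

variable {D : Type*} [NormedAddCommGroup D] [PartialOrder D]

def dominatingNorms (x : D) : Set ℝ :=
  {r : ℝ | ∃ a : D, 0 ≤ a ∧ -a ≤ x ∧ x ≤ a ∧ r = ‖a‖}

lemma dominatingNorms_nonempty [AddLeftMono D] {y z : D} (hy : 0 ≤ y) (hz : 0 ≤ z) :
    (dominatingNorms (y - z)).Nonempty :=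
  ⟨‖y + z‖, y + z, add_nonneg hy hz, (neg_add_le_sub_and_sub_le_add hy hz).1,
    (neg_add_le_sub_and_sub_le_add hy hz).2, rfl⟩

lemma exists_dominating_norm_lt {x : D} {r : ℝ} (hne : (dominatingNorms x).Nonempty)
    (hr : sInf (dominatingNorms x) < r) : ∃ a : D, 0 ≤ a ∧ -a ≤ x ∧ x ≤ a ∧ ‖a‖ < r := by
  obtain ⟨_, ⟨a, ha, hxa, hax, rfl⟩, har⟩ := exists_lt_of_csInf_lt hne hr
  exact ⟨a, ha, hxa, hax, har⟩

lemma exists_dominating_map [AddLeftMono D] (hgen : ∀ x : D, ∃ y z : D, 0 ≤ y ∧ 0 ≤ z ∧ x = y - z)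
    {C δ : ℝ} (hdom : ∀ x : D, sInf (dominatingNorms x) ≤ C * ‖x‖) (hδ : 0 < δ) :
    ∃ h : D → D, h 0 = 0 ∧ ∀ v, 0 ≤ h v ∧ -h v ≤ v ∧ v ≤ h v ∧ (v ≠ 0 → ‖h v‖ ≤ C * ‖v‖ + δ) := by
  have hex : ∀ v : D, ∃ a : D, 0 ≤ a ∧ -a ≤ v ∧ v ≤ a ∧ ‖a‖ < C * ‖v‖ + δ := by
    intro v
    obtain ⟨y, z, hy, hz, rfl⟩ := hgen v
    exact exists_dominating_norm_lt (dominatingNorms_nonempty hy hz)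
      ((hdom _).trans_lt (lt_add_of_pos_right _ hδ))
  choose a ha hva hav hnorm using hex
  classical
  refine ⟨fun v => if v = 0 then 0 else a v, if_pos rfl, fun v => ?_⟩
  by_cases hv : v = 0
  · simp [hv]
  · simp only [hv, if_false, ne_eq, not_false_eq_true, forall_const]
    exact ⟨ha v, hva v, hav v, (hnorm v).le⟩

end DominatingNorms

lemma integral_norm_map_le {X E F : Type*} [MeasurableSpace X] {μ : Measure X}
    [NormedAddCommGroup E] [NormedAddCommGroup F] (f : SimpleFunc X E)
    (hf : μ (support f) < ⊤) {h : E → F} (h0 : h 0 = 0) {C δ : ℝ}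
    (hh : ∀ v, v ≠ 0 → ‖h v‖ ≤ C * ‖v‖ + δ) :
    ∫ x, ‖f.map h x‖ ∂μ ≤ C * ∫ x, ‖f x‖ ∂μ + δ * μ.real (support f) := by
  have hf_int : Integrable (fun x => ‖f x‖) μ :=
    (SimpleFunc.integrable_iff_finMeasSupp.2 (SimpleFunc.finMeasSupp_iff_support.2 hf)).norm
  have hg_int : Integrable (fun x => ‖f.map h x‖) μ :=
    (SimpleFunc.integrable_iff_finMeasSupp.2 (SimpleFunc.finMeasSupp_iff_support.2
      ((measure_mono (support_comp_subset h0 f)).trans_lt hf))).norm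
  have hind_int : Integrable ((support f).indicator fun _ => δ) μ :=
    (integrable_indicator_iff f.measurableSet_support).2 (integrableOn_const hf.ne)
  have hpointwise : ∀ x, ‖f.map h x‖ ≤ C * ‖f x‖ + (support f).indicator (fun _ => δ) x := by
    intro x
    by_cases hx : f x = 0
    · simp [hx, h0]
    · rw [Set.indicator_of_mem (mem_support.2 hx)]
      exact hh _ hx
  calc ∫ x, ‖f.map h x‖ ∂μ
      ≤ ∫ x, (C * ‖f x‖ + (support f).indicator (fun _ => δ) x) ∂μ :=
        integral_mono hg_int ((hf_int.const_mul C).add hind_int) hpointwise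
    _ = C * ∫ x, ‖f x‖ ∂μ + δ * μ.real (support f) := by
        rw [integral_add (hf_int.const_mul C) hind_int, integral_const_mul,
          integral_indicator_const δ f.measurableSet_support, smul_eq_mul, mul_comm δ]

theorem simple_function_dominated_by_positive_simple_function_general
    {X : Type*} [MeasurableSpace X] (μ : Measure X)
    {D : Type*} [NormedAddCommGroup D]
    [PartialOrder D] [CovariantClass D D (· + ·) (· ≤ ·)]
    (hgen : ∀ x : D, ∃ y z : D, 0 ≤ y ∧ 0 ≤ z ∧ x = y - z)
    (C : ℝ)
    (hdom : ∀ x : D,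
      sInf {r : ℝ | ∃ a : D, 0 ≤ a ∧ -a ≤ x ∧ x ≤ a ∧ r = ‖a‖} ≤ C * ‖x‖)
    (f : SimpleFunc X D) (hf : μ (Function.support f) < ⊤)
    (ε : ℝ) (hε : 0 < ε) :
    ∃ g : SimpleFunc X D, μ (Function.support g) < ⊤ ∧
      (∀ x, 0 ≤ g x) ∧ (∀ x, -g x ≤ f x ∧ f x ≤ g x) ∧
      ∫ x, ‖g x‖ ∂μ ≤ C * ∫ x, ‖f x‖ ∂μ + ε := by
  obtain ⟨δ, hδ, hδε⟩ := exists_pos_mul_lt hε (μ.real (support f))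
  obtain ⟨h, h0, hdomin⟩ := exists_dominating_map hgen hdom hδ
  refine ⟨f.map h, (measure_mono (support_comp_subset h0 f)).trans_lt hf,
    fun x => (hdomin (f x)).1, fun x => ⟨(hdomin (f x)).2.1, (hdomin (f x)).2.2.1⟩, ?_⟩
  calc ∫ x, ‖f.map h x‖ ∂μ ≤ C * ∫ x, ‖f x‖ ∂μ + δ * μ.real (support f) :=
        integral_norm_map_le f hf h0 fun v hv => (hdomin v).2.2.2 hv
    _ ≤ C * ∫ x, ‖f x‖ ∂μ + ε := by linarith

/-- For a simple function `f` with values in a directed ordered Banach space whose norm is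
`C`-absolutely dominating, there is a positive simple function `g` with `-g ≤ f ≤ g` and
`∫ ‖g‖ ≤ C ∫ ‖f‖ + ε`. -/
theorem simple_function_dominated_by_positive_simple_function
    {X : Type*} [MeasurableSpace X] (μ : Measure X)
    [μ.IsComplete] [SigmaFinite μ]
    {D : Type*} [NormedAddCommGroup D] [NormedSpace ℝ D] [CompleteSpace D]
    [PartialOrder D] [CovariantClass D D (· + ·) (· ≤ ·)]
    (hsmul : ∀ (c : ℝ) (x : D), 0 ≤ c → 0 ≤ x → 0 ≤ c • x)
    (hgen : ∀ x : D, ∃ y z : D, 0 ≤ y ∧ 0 ≤ z ∧ x = y - z)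
    (C : ℝ) (hC : 0 < C)
    (hdom : ∀ x : D,
      sInf {r : ℝ | ∃ a : D, 0 ≤ a ∧ -a ≤ x ∧ x ≤ a ∧ r = ‖a‖} ≤ C * ‖x‖)
    (f : SimpleFunc X D) (hf : μ (Function.support f) < ⊤)
    (ε : ℝ) (hε : 0 < ε) :
    ∃ g : SimpleFunc X D, μ (Function.support g) < ⊤ ∧
      (∀ x, 0 ≤ g x) ∧ (∀ x, -g x ≤ f x ∧ f x ≤ g x) ∧
      ∫ x, ‖g x‖ ∂μ ≤ C * ∫ x, ‖f x‖ ∂μ + ε :=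
  simple_function_dominated_by_positive_simple_function_general μ hgen C hdom f hf ε hε
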